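/- arXiv:2112.04072 — 2 statements merged into one kernel-verified Lean document; each statement's English description precedes it below -/
import Mathlib

section
/- Let H be a group, let A and B be finite subgroups of H, and let σ : A → B be an isomorphism. Suppose A and B are conjugate in H, i.e. there exists h ∈ H with B = h A h⁻¹. Then the HNN extension G = ⟨H, t | t a t⁻¹ = σ(a) for all a ∈ A⟩ is not co-Hopfian: there exists an injective group endomorphism of G that is not surjective. -/
/-!
Write `K` for the image of `B` in `G`. Since `h⁻¹ B h = A` and `t A t⁻¹ = B`, the element
`v = t h⁻¹` normalizes the finite subgroup `K`, so some power `v ^ m` with `m > 0`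
centralizes it. Hence `v ^ m t` conjugates `a ∈ A` to `σ a` just as `t` does, and there is an
endomorphism `ψ` of `G` fixing `H` with `ψ t = (t h⁻¹) ^ m t`.

`ψ` is injective by Britton's lemma: it sends a reduced word to the word obtained by replacing
each letter `t^ε g` by `(t^ε h^(-ε)) ^ m t^ε g`, and the new letters all have the sign `ε`,
so no pinch is created. It is not surjective, since it multiplies the exponent sum of `t`
by `m + 1`.
-/

open FirstOrder Language

/-- Function symbols of the first-order language of groups:
a binary multiplication, a unary inverse and a constant for the identity. -/
inductive GroupFunc : ℕ → Type
  | mul : GroupFunc 2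
  | inv : GroupFunc 1
  | one : GroupFunc 0

/-- The first-order language of groups. -/
def groupLang : FirstOrder.Language :=
  { Functions := GroupFunc
    Relations := fun _ => Empty }

/-- Every group is a structure for the language of groups in the natural way. -/
instance groupLangStructure (G : Type*) [Group G] : groupLang.Structure G where
  funMap {n} f v :=
    match f with
    | .mul => v 0 * v 1
    | .inv => (v 0)⁻¹
    | .one => 1
  RelMap {n} r _ := r.elim

/-- Existential formulas: iterated existential quantifications of a
quantifier-free formula. -/
inductive IsExistentialQF {α : Type*} : ∀ {n : ℕ}, groupLang.BoundedFormula α n → Prop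
  | of_isQF {n : ℕ} {φ : groupLang.BoundedFormula α n} (h : φ.IsQF) : IsExistentialQF φ
  | ex {n : ℕ} {φ : groupLang.BoundedFormula α (n + 1)} (h : IsExistentialQF φ) :
      IsExistentialQF φ.ex

/-- Universal formulas: iterated universal quantifications of a
quantifier-free formula. -/
inductive IsUniversalQF {α : Type*} : ∀ {n : ℕ}, groupLang.BoundedFormula α n → Prop
  | of_isQF {n : ℕ} {φ : groupLang.BoundedFormula α n} (h : φ.IsQF) : IsUniversalQF φ
  | all {n : ℕ} {φ : groupLang.BoundedFormula α (n + 1)} (h : IsUniversalQF φ) :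
      IsUniversalQF φ.all

/-- ∀∃-formulas: iterated universal quantifications of an existential formula. -/
inductive IsAE {α : Type*} : ∀ {n : ℕ}, groupLang.BoundedFormula α n → Prop
  | of_existential {n : ℕ} {φ : groupLang.BoundedFormula α n} (h : IsExistentialQF φ) : IsAE φ
  | all {n : ℕ} {φ : groupLang.BoundedFormula α (n + 1)} (h : IsAE φ) : IsAE φ.all

/-- A group is virtually free if it has a free subgroup of finite index. -/
def VirtuallyFree (G : Type*) [Group G] : Prop :=
  ∃ H : Subgroup G, H.FiniteIndex ∧ Nonempty (IsFreeGroup H)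

/-- A group is co-Hopfian if every injective endomorphism is surjective. -/
def CoHopfian (G : Type*) [Group G] : Prop :=
  ∀ φ : G →* G, Function.Injective φ → Function.Surjective φ

/-- Two homomorphisms `φ, φ' : G → G'` are equivalent if they coincide up to
conjugation on every finite subgroup of `G`. -/
def HomEquiv {G G' : Type*} [Group G] [Group G'] (φ φ' : G →* G') : Prop :=
  ∀ H : Subgroup G, (H : Set G).Finite →
    ∃ g' : G', ∀ h ∈ H, φ' h = g' * φ h * g'⁻¹

/-- Two groups are ∀∃-equivalent if they satisfy the same ∀∃-sentences. -/
def AEEquivalent (G : Type*) (G' : Type*) [Group G] [Group G'] : Prop :=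
  ∀ φ : groupLang.Sentence, IsAE φ → (G ⊨ φ ↔ G' ⊨ φ)

/-- Two groups are ∃-equivalent if they satisfy the same existential sentences. -/
def ExistentiallyEquivalent (G : Type*) (G' : Type*) [Group G] [Group G'] : Prop :=
  ∀ φ : groupLang.Sentence, IsExistentialQF φ → (G ⊨ φ ↔ G' ⊨ φ)

/-- An endomorphism is rigid-testing: `G` is rigid if every endomorphism
equivalent to the identity is an automorphism. -/
def Rigid (G : Type*) [Group G] : Prop :=
  ∀ φ : G →* G, HomEquiv φ (MonoidHom.id G) → Function.Bijective φ

/-- `Out G` is finite, expressed as: the inner automorphisms form a finite index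
subgroup of `Aut G`. -/
def OutFinite (G : Type*) [Group G] : Prop :=
  (MulAut.conj : G →* MulAut G).range.FiniteIndex

/-- Iterated composition of an endomorphism. -/
def homPow {G : Type*} [Group G] (φ : G →* G) : ℕ → (G →* G)
  | 0 => MonoidHom.id G
  | n + 1 => φ.comp (homPow φ n)

/-- An endomorphism `φ` of `G` is class-permuting if some positive power of `φ`
is equivalent to the identity of `G`. -/
def ClassPermuting {G : Type*} [Group G] (φ : G →* G) : Prop :=
  ∃ n : ℕ, 1 ≤ n ∧ HomEquiv (homPow φ n) (MonoidHom.id G)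

/-- A maximal finite subgroup: a finite subgroup maximal with respect to
inclusion among finite subgroups. -/
def MaximalFiniteSubgroup {G : Type*} [Group G] (A : Subgroup G) : Prop :=
  (A : Set G).Finite ∧ ∀ B : Subgroup G, (B : Set G).Finite → A ≤ B → A = B

/-- Two subgroups are conjugate. -/
def SubgroupConj {G : Type*} [Group G] (A B : Subgroup G) : Prop :=
  ∃ g : G, B = A.map (MulAut.conj g).toMonoidHom

/-- A group is strongly co-Hopfian if there is a finite subset `F` of
`G \ {1}` such that every endomorphism whose kernel misses `F` is an
automorphism. -/
def StronglyCoHopfian (G : Type*) [Group G] : Prop :=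
  ∃ F : Finset G, (1 : G) ∉ F ∧
    ∀ φ : G →* G, (∀ f ∈ F, φ f ≠ 1) → Function.Bijective φ

/-- A group is finitely presented. -/
def GroupFinitelyPresented (G : Type*) [Group G] : Prop :=
  ∃ (n : ℕ) (rels : Finset (FreeGroup (Fin n))),
    Nonempty (PresentedGroup (rels : Set (FreeGroup (Fin n))) ≃* G)

namespace Subgroup

theorem exists_pow_mem_centralizer_of_mem_normalizer {G : Type*} [Group G] {K : Subgroup G}
    [Finite K] {g : G} (hg : g ∈ normalizer (K : Set G)) :
    ∃ n : ℕ, 0 < n ∧ g ^ n ∈ centralizer (K : Set G) := by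
  obtain ⟨n, hn, hpow⟩ :=
    (isOfFinOrder_of_finite (K.normalizerMonoidHom ⟨g, hg⟩)).exists_pow_eq_one
  rw [← map_pow, ← MonoidHom.mem_ker, normalizerMonoidHom_ker, mem_subgroupOf] at hpow
  exact ⟨n, hn, hpow⟩

end Subgroup

namespace HNNExtension

variable {G : Type*} [Group G] {A B : Subgroup G} {φ : A ≃* B}

theorem map_map_conj_t :
    (A.map (of : G →* HNNExtension G A B φ)).map (MulAut.conj t).toMonoidHom = B.map of := by
  ext x
  simp only [Subgroup.mem_map]
  constructor
  · rintro ⟨_, ⟨a, ha, rfl⟩, rfl⟩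
    exact ⟨φ ⟨a, ha⟩, (φ ⟨a, ha⟩).2, equiv_eq_conj ⟨a, ha⟩⟩
  · rintro ⟨b, hb, rfl⟩
    refine ⟨_, ⟨φ.symm ⟨b, hb⟩, (φ.symm ⟨b, hb⟩).2, rfl⟩, ?_⟩
    simp [← equiv_eq_conj]

theorem t_mul_of_inv_mem_normalizer {h : G} (hconj : B = A.map (MulAut.conj h).toMonoidHom) :
    t * of h⁻¹ ∈ Subgroup.normalizer
      (B.map (of : G →* HNNExtension G A B φ) : Set (HNNExtension G A B φ)) := by
  have hB : B.map (of : G →* HNNExtension G A B φ) =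
      A.map ((of : G →* HNNExtension G A B φ).comp (MulAut.conj h).toMonoidHom) := by
    rw [← Subgroup.map_map, ← hconj]
  have hBA : (B.map (of : G →* HNNExtension G A B φ)).map (MulAut.conj (of h⁻¹)).toMonoidHom =
      A.map of := by
    rw [hB, Subgroup.map_map]
    congr 1
    ext g
    simp [MulEquiv.toMonoidHom_eq_coe, mul_assoc]
  rw [Subgroup.mem_normalizer_iff_map_conj_eq, map_mul, MulAut.mul_def,
    MulEquiv.coe_monoidHom_trans, ← Subgroup.map_map]
  simp only [← MulEquiv.toMonoidHom_eq_coe]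
  rw [hBA, map_map_conj_t]

theorem mul_t_mul_of_of_mem_centralizer {x : HNNExtension G A B φ}
    (hx : x ∈ Subgroup.centralizer (B.map (of : G →* HNNExtension G A B φ) : Set _)) (a : A) :
    x * t * of (a : G) = of (φ a : G) * (x * t) := by
  have hxb : of (φ a : G) * x = x * of (φ a : G) :=
    Subgroup.mem_centralizer_iff.1 hx _ ⟨_, (φ a).2, rfl⟩
  rw [mul_assoc, t_mul_of, ← mul_assoc, ← hxb, mul_assoc]

def tExponent : HNNExtension G A B φ →* Multiplicative ℤ :=
  lift 1 (Multiplicative.ofAdd 1) (by simp)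

@[simp]
theorem tExponent_of (g : G) : tExponent (of g : HNNExtension G A B φ) = 1 :=
  lift_of _ _ _ g

@[simp]
theorem tExponent_t : tExponent (t : HNNExtension G A B φ) = Multiplicative.ofAdd 1 :=
  lift_t _ _ _

section Substitution

variable {ψ : HNNExtension G A B φ →* HNNExtension G A B φ} {n : ℕ} {k : G}

theorem tExponent_map_of_map_t_eq (hof : ∀ g, ψ (of g) = of g)
    (ht : ψ t = (t * of k) ^ n * t) (x : HNNExtension G A B φ) :
    tExponent (ψ x) = tExponent x ^ (n + 1) := by
  suffices tExponent.comp ψ = (powMonoidHom (n + 1)).comp (tExponent (φ := φ)) from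
    DFunLike.congr_fun this x
  refine hom_ext (MonoidHom.ext fun g => ?_) ?_
  · simp [hof]
  · simp [ht, pow_succ]

theorem not_surjective_of_map_t_eq (hn : 0 < n) (hof : ∀ g, ψ (of g) = of g)
    (ht : ψ t = (t * of k) ^ n * t) : ¬ Function.Surjective ψ := by
  intro hψ
  obtain ⟨x, hx⟩ := hψ t
  have h := congrArg (Multiplicative.toAdd ∘ tExponent) hx
  simp only [Function.comp_apply, tExponent_map_of_map_t_eq hof ht, toAdd_pow, tExponent_t,
    toAdd_ofAdd, nsmul_eq_mul] at h
  have := Int.eq_one_of_mul_eq_one_right (by positivity) h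
  omega

/-- Under `t ↦ (t * of k) ^ n * t`, the letter `(ε, g)`, i.e. `t ^ ε * of g`, becomes
`(t ^ ε * of (k ^ ε)) ^ n * t ^ ε * of g`. -/
def letterBlock (n : ℕ) (k : G) (p : ℤˣ × G) : List (ℤˣ × G) :=
  List.replicate n (p.1, k ^ (p.1 : ℤ)) ++ [p]

theorem letterBlock_ne_nil (n : ℕ) (k : G) (p : ℤˣ × G) : letterBlock n k p ≠ [] := by
  simp [letterBlock]

theorem fst_eq_of_mem_letterBlock {p x : ℤˣ × G} (hx : x ∈ letterBlock n k p) :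
    x.1 = p.1 := by
  simp only [letterBlock, List.mem_append, List.mem_replicate, List.mem_singleton] at hx
  rcases hx with ⟨-, rfl⟩ | rfl <;> rfl

theorem isChain_flatMap_letterBlock (n : ℕ) (k : G) {l : List (ℤˣ × G)}
    (hl : l.IsChain (fun a b => a.2 ∈ toSubgroup A B a.1 → a.1 = b.1)) :
    (l.flatMap (letterBlock n k)).IsChain
      (fun a b => a.2 ∈ toSubgroup A B a.1 → a.1 = b.1) := by
  rw [List.flatMap_def, List.isChain_flatten (by simp [letterBlock_ne_nil]), List.isChain_map]
  refine ⟨?_, hl.imp fun p q hpq x hx y hy => ?_⟩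
  · simp only [List.mem_map]
    rintro _ ⟨p, -, rfl⟩
    refine List.Pairwise.isChain (List.pairwise_of_forall_mem_list fun a ha b hb _ => ?_)
    rw [fst_eq_of_mem_letterBlock ha, fst_eq_of_mem_letterBlock hb]
  · obtain rfl : p = x := by simpa [letterBlock] using hx
    rw [fst_eq_of_mem_letterBlock (List.mem_of_mem_head? hy)]
    exact hpq

theorem map_t_zpow_unit (ht : ψ t = (t * of k) ^ n * t) (ε : ℤˣ) :
    ψ t ^ (ε : ℤ) = (t ^ (ε : ℤ) * of (k ^ (ε : ℤ))) ^ n * t ^ (ε : ℤ) := by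
  rcases Int.units_eq_one_or ε with rfl | rfl
  · simp [ht]
  · simp [ht, mul_pow_mul, ← inv_pow]

theorem prod_map_letterBlock (hof : ∀ g, ψ (of g) = of g) (ht : ψ t = (t * of k) ^ n * t)
    (p : ℤˣ × G) :
    ((letterBlock n k p).map fun x => t ^ (x.1 : ℤ) * of x.2).prod =
      ψ (t ^ (p.1 : ℤ) * of p.2) := by
  simp [letterBlock, map_t_zpow_unit ht, hof, mul_assoc]

namespace NormalWord.ReducedWord

def substT (n : ℕ) (k : G) (w : ReducedWord G A B) : ReducedWord G A B where
  head := w.head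
  toList := w.toList.flatMap (letterBlock n k)
  chain := isChain_flatMap_letterBlock n k w.chain

theorem prod_substT (hof : ∀ g, ψ (of g) = of g) (ht : ψ t = (t * of k) ^ n * t)
    (w : ReducedWord G A B) : (w.substT n k).prod φ = ψ (w.prod φ) := by
  simp only [prod, substT, map_mul, hof, List.flatMap_def, List.map_flatten, List.map_map,
    List.prod_flatten, map_list_prod]
  exact congrArg (of w.head * List.prod ·)
    (List.map_congr_left fun p _ => prod_map_letterBlock hof ht p)

end NormalWord.ReducedWord

theorem injective_of_map_t_eq (hof : ∀ g, ψ (of g) = of g) (ht : ψ t = (t * of k) ^ n * t) :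
    Function.Injective ψ := by
  refine (injective_iff_map_eq_one ψ).2 fun g hg => ?_
  obtain ⟨d⟩ := NormalWord.TransversalPair.nonempty G A B
  set w := (NormalWord.equiv φ d g).toReducedWord
  have hw : w.prod φ = g := (NormalWord.equiv φ d).symm_apply_apply g
  have hnil : (w.substT n k).toList = [] := by
    refine ReducedWord.toList_eq_nil_of_mem_of_range φ _ ?_
    rw [NormalWord.ReducedWord.prod_substT hof ht, hw, hg]
    exact one_mem _
  have hw_nil : w.toList = [] := by
    refine List.eq_nil_iff_forall_not_mem.2 fun p hp => letterBlock_ne_nil n k p ?_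
    exact List.flatMap_eq_nil_iff.1 hnil p hp
  have hg_head : g = of w.head := by
    rw [← hw, NormalWord.ReducedWord.prod, hw_nil, List.map_nil, List.prod_nil, mul_one]
  rw [hg_head, ← hof, ← hg_head, hg]

end Substitution

end HNNExtension

theorem hnnExtension_conjugate_finite_subgroups_not_coHopfian_general
    (H : Type*) [Group H] (A B : Subgroup H)
    (hB : (B : Set H).Finite)
    (σ : A ≃* B) (h : H) (hconj : B = A.map (MulAut.conj h).toMonoidHom) :
    ∃ ψ : HNNExtension H A B σ →* HNNExtension H A B σ,
      Function.Injective ψ ∧ ¬ Function.Surjective ψ := by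
  have : Finite (B.map (HNNExtension.of : H →* HNNExtension H A B σ)) :=
    (hB.image _).to_subtype
  obtain ⟨m, hm, hcent⟩ := Subgroup.exists_pow_mem_centralizer_of_mem_normalizer
    (HNNExtension.t_mul_of_inv_mem_normalizer (φ := σ) hconj)
  have hc := HNNExtension.mul_t_mul_of_of_mem_centralizer hcent
  have hof := HNNExtension.lift_of _ _ hc
  have ht := HNNExtension.lift_t _ _ hc
  exact ⟨_, HNNExtension.injective_of_map_t_eq hof ht,
    HNNExtension.not_surjective_of_map_t_eq hm hof ht⟩

/-- An HNN extension over an isomorphism between two conjugate finite subgroups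
is not co-Hopfian. -/
theorem hnnExtension_conjugate_finite_subgroups_not_coHopfian
    (H : Type*) [Group H] (A B : Subgroup H)
    (hA : (A : Set H).Finite) (hB : (B : Set H).Finite)
    (σ : A ≃* B) (h : H) (hconj : B = A.map (MulAut.conj h).toMonoidHom) :
    ∃ ψ : HNNExtension H A B σ →* HNNExtension H A B σ,
      Function.Injective ψ ∧ ¬ Function.Surjective ψ :=
  hnnExtension_conjugate_finite_subgroups_not_coHopfian_general H A B hB σ h hconj
end

section
/- Let G be a finitely presented group. If G is strongly co-Hopfian, then G is prime (for every group G' elementarily equivalent to G there exists an elementary embedding of G into G') and G is ∃-homogeneous (any two n-tuples of elements of G having the same existential type are mapped one to the other by some automorphism of G). -/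
open FirstOrder Language

/-! Write `G = ⟨x | R⟩` and let `F` witness that `G` is strongly co-Hopfian, each element of `F`
written as a word in the generators. The quantifier-free formula `θ(x)`: "every relator of `R`
vanishes at `x` and no word of `F` does" holds in a group `H` exactly at the images of the
generating tuple `g` under homomorphisms `G → H` not killing `F`. In `G` those homomorphisms are
automorphisms, so `θ` defines the `Aut(G)`-orbit of `g`, and all realizations of `θ` in `G` share
the complete type of `g`.

If `G ≡ G'`, the sentence `∃x θ(x)` gives a realization `x'` in `G'`, hence a homomorphism
`ψ : G → G'` with `ψ g = x'`. For every formula `φ`, one of `∀x (θ → φ)` and `∀x (θ → ¬φ)` holds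
in `G`, hence in `G'`, so `x'` has the type of `g`; as `g` generates `G`, `ψ` is elementary.

If `u, v` have the same existential type, write `u = w(g)` for words `w`. The existential formula
`∃x (θ(x) ∧ y = w(x))` holds at `u`, hence at `v` with some witness `x = σ g`, `σ ∈ Aut(G)`,
and then `σ u = w(σ g) = v`. -/

namespace FirstOrder.Language

variable {L : Language} {M N : Type*} [L.Structure M] [L.Structure N] {α : Type*}

theorem Formula.realize_iAlls_relabel_inr [Finite α] (φ : L.Formula α) :
    M ⊨ (φ.relabel (Sum.inr : α → Empty ⊕ α)).iAlls α ↔ ∀ x : α → M, φ.Realize x := by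
  simp [Sentence.Realize]

theorem Formula.realize_iExs_relabel_inr [Finite α] (φ : L.Formula α) :
    M ⊨ (φ.relabel (Sum.inr : α → Empty ⊕ α)).iExs α ↔ ∃ x : α → M, φ.Realize x := by
  simp [Sentence.Realize]

theorem BoundedFormula.IsQF.iInf {n : ℕ} {β : Type*} [Finite β] {f : β → L.BoundedFormula α n}
    (hf : ∀ b, (f b).IsQF) : (BoundedFormula.iInf f).IsQF := by
  let _ := Fintype.ofFinite β
  suffices ∀ l : List β, ((l.map f).foldr (· ⊓ ·) ⊤).IsQF from this _
  intro l
  induction l with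
  | nil => exact IsQF.top
  | cons b l ih => exact (hf b).inf ih

theorem ElementarilyEquivalent.realize_iff_of_forall_realize_iff [Finite α] (h : M ≅[L] N)
    {θ : L.Formula α} {x : α → M}
    (hθ : ∀ x' : α → M, θ.Realize x' → ∀ φ : L.Formula α, φ.Realize x' ↔ φ.Realize x)
    {y : α → N} (hy : θ.Realize y) (φ : L.Formula α) : φ.Realize y ↔ φ.Realize x := by
  have transfer : ∀ χ : L.Formula α, (∀ x' : α → M, θ.Realize x' → χ.Realize x') →
      χ.Realize y := fun χ hχ =>
    (Formula.realize_iAlls_relabel_inr (θ.imp χ)).1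
      ((h.realize_sentence _).1 ((Formula.realize_iAlls_relabel_inr (θ.imp χ)).2 hχ)) y hy
  by_cases hx : φ.Realize x
  · exact iff_of_true (transfer φ fun x' hx' => (hθ x' hx' φ).2 hx) hx
  · exact iff_of_false (transfer φ.not fun x' hx' => (hθ x' hx' φ).not.2 hx) hx

def ElementaryEmbedding.ofGenerators {F : Type*} [FunLike F M N] [L.HomClass F M N] (f : F)
    (g : α → M) (hg : ∀ m : M, ∃ t : L.Term α, t.realize g = m)
    (hf : ∀ φ : L.Formula α, φ.Realize (f ∘ g) ↔ φ.Realize g) : M ↪ₑ[L] N where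
  toFun := f
  map_formula' _ φ x := by
    choose t ht using fun i => hg (x i)
    have hx : x = fun i => (t i).realize g := funext fun i => (ht i).symm
    have hfx : f ∘ x = fun i => (t i).realize (f ∘ g) := by
      funext i
      rw [Function.comp_apply, hx, HomClass.realize_term]
    rw [hfx, hx]
    exact BoundedFormula.realize_subst.symm.trans
      ((hf (φ.subst t)).trans BoundedFormula.realize_subst)

end FirstOrder.Language

instance groupLang.strongHomClass {F G H : Type*} [Group G] [Group H] [FunLike F G H]
    [MonoidHomClass F G H] : groupLang.StrongHomClass F G H where
  map_fun φ _ f x := by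
    cases f
    · exact map_mul φ _ _
    · exact map_inv φ _
    · exact map_one φ
  map_rel _ _ r := r.elim

theorem isExistentialQF_exs {α : Type*} {n : ℕ} {φ : groupLang.BoundedFormula α n}
    (hφ : IsExistentialQF φ) : IsExistentialQF φ.exs := by
  induction n with
  | zero => exact hφ
  | succ n ih => exact ih hφ.ex

theorem FirstOrder.Language.BoundedFormula.IsQF.isExistentialQF_iExs {α β : Type*} [Finite β]
    {φ : groupLang.Formula (α ⊕ β)} (hφ : φ.IsQF) : IsExistentialQF (φ.iExs β) :=
  isExistentialQF_exs (.of_isQF (hφ.relabel _))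

namespace FreeGroup

variable {ι : Type*}

theorem hom_map_lift {G H : Type*} [Group G] [Group H] (ψ : G →* H) (f : ι → G)
    (w : FreeGroup ι) : ψ (lift f w) = lift (ψ ∘ f) w :=
  lift_unique (ψ.comp (lift f)) fun _ => by simp

def termOfList : List (ι × Bool) → groupLang.Term ι
  | [] => Term.func GroupFunc.one ![]
  | (a, true) :: l => Term.func GroupFunc.mul ![Term.var a, termOfList l]
  | (a, false) :: l =>
    Term.func GroupFunc.mul ![Term.func GroupFunc.inv ![Term.var a], termOfList l]

theorem realize_termOfList {G : Type*} [Group G] (v : ι → G) (l : List (ι × Bool)) :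
    (termOfList l).realize v = lift v (mk l) := by
  induction l with
  | nil => rfl
  | cons x l ih =>
    obtain ⟨a, _ | _⟩ := x <;>
    · rw [lift_mk] at ih ⊢
      rw [List.map_cons, List.prod_cons, ← ih]
      rfl

variable [DecidableEq ι]

def toTerm (w : FreeGroup ι) : groupLang.Term ι := termOfList w.toWord

@[simp]
theorem realize_toTerm {G : Type*} [Group G] (v : ι → G) (w : FreeGroup ι) :
    w.toTerm.realize v = lift v w := by
  rw [toTerm, realize_termOfList, mk_toWord]

def eqFormula (w w' : FreeGroup ι) : groupLang.Formula ι := w.toTerm.equal w'.toTerm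

@[simp]
theorem realize_eqFormula {G : Type*} [Group G] (v : ι → G) (w w' : FreeGroup ι) :
    (eqFormula w w').Realize v ↔ lift v w = lift v w' := by
  simp [eqFormula]

theorem isQF_eqFormula (w w' : FreeGroup ι) : (eqFormula w w').IsQF :=
  (BoundedFormula.IsAtomic.equal _ _).isQF

noncomputable def presentationFormula (rels ws : Finset (FreeGroup ι)) : groupLang.Formula ι :=
  (Formula.iInf fun r : rels => eqFormula r.1 1) ⊓ Formula.iInf fun w : ws => (eqFormula w.1 1).not

theorem isQF_presentationFormula (rels ws : Finset (FreeGroup ι)) :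
    (presentationFormula rels ws).IsQF :=
  (BoundedFormula.IsQF.iInf fun _ => isQF_eqFormula _ _).inf
    (BoundedFormula.IsQF.iInf fun _ => (isQF_eqFormula _ _).not)

theorem realize_presentationFormula {G : Type*} [Group G] (rels ws : Finset (FreeGroup ι))
    (x : ι → G) :
    (presentationFormula rels ws).Realize x ↔
      (∀ r ∈ rels, lift x r = 1) ∧ ∀ w ∈ ws, lift x w ≠ 1 := by
  simp [presentationFormula]

end FreeGroup

namespace PresentedGroup

open FreeGroup

variable {G H : Type*} [Group G] [Group H] {ι : Type*}

section

variable {rels : Set (FreeGroup ι)}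

theorem lift_comp_of (e : PresentedGroup rels ≃* G) :
    lift (e ∘ of) = e.toMonoidHom.comp (mk rels) :=
  ext_hom _ _ fun _ => by simp [PresentedGroup.of]

theorem lift_comp_of_surjective (e : PresentedGroup rels ≃* G) :
    Function.Surjective (lift (e ∘ of)) := by
  rw [lift_comp_of]
  exact e.surjective.comp (mk_surjective rels)

theorem exists_hom_comp_eq_iff (e : PresentedGroup rels ≃* G) (x : ι → H) :
    (∃ ψ : G →* H, ψ ∘ e ∘ of = x) ↔ ∀ r ∈ rels, lift x r = 1 := by
  constructor
  · rintro ⟨ψ, rfl⟩ r hr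
    rw [← hom_map_lift, lift_comp_of]
    simp [one_of_mem hr]
  · intro hx
    refine ⟨(toGroup hx).comp e.symm.toMonoidHom, funext fun i => ?_⟩
    simp

end

variable [DecidableEq ι] {rels : Finset (FreeGroup ι)}

theorem realize_presentationFormula_iff_exists_hom
    (e : PresentedGroup (rels : Set (FreeGroup ι)) ≃* G) (ws : Finset (FreeGroup ι))
    (x : ι → H) :
    (presentationFormula rels ws).Realize x ↔
      ∃ ψ : G →* H, ψ ∘ e ∘ of = x ∧ ∀ w ∈ ws, ψ (lift (e ∘ of) w) ≠ 1 := by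
  rw [realize_presentationFormula]
  constructor
  · rintro ⟨hrels, hws⟩
    obtain ⟨ψ, rfl⟩ := (exists_hom_comp_eq_iff e x).2 hrels
    exact ⟨ψ, rfl, fun w hw => by rw [hom_map_lift]; exact hws w hw⟩
  · rintro ⟨ψ, rfl, hws⟩
    exact ⟨(exists_hom_comp_eq_iff e _).1 ⟨ψ, rfl⟩,
      fun w hw => by rw [← hom_map_lift]; exact hws w hw⟩

theorem realize_presentationFormula_iff_exists_mulEquiv
    (e : PresentedGroup (rels : Set (FreeGroup ι)) ≃* G) {F : Finset G} (hF₁ : 1 ∉ F)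
    (hF : ∀ φ : G →* G, (∀ f ∈ F, φ f ≠ 1) → Function.Bijective φ) (x : ι → G) :
    (presentationFormula rels (F.image (Function.surjInv (lift_comp_of_surjective e)))).Realize x ↔
      ∃ σ : G ≃* G, σ ∘ e ∘ of = x := by
  rw [realize_presentationFormula_iff_exists_hom e]
  simp only [Finset.mem_image, forall_exists_index, and_imp, forall_apply_eq_imp_iff₂,
    Function.surjInv_eq]
  constructor
  · rintro ⟨ψ, rfl, hψ⟩
    exact ⟨.ofBijective ψ (hF ψ hψ), rfl⟩
  · rintro ⟨σ, rfl⟩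
    exact ⟨σ, rfl, fun f hf => σ.map_ne_one_iff.2 (ne_of_mem_of_not_mem hf hF₁)⟩

end PresentedGroup

section AutOrbit

open FreeGroup

variable {G : Type*} [Group G] {ι : Type*} [Finite ι] [DecidableEq ι] {g : ι → G}
  {θ : groupLang.Formula ι}

theorem nonempty_elementaryEmbedding_of_forall_realize_iff_exists_mulEquiv {G' : Type*} [Group G']
    (h : G ≅[groupLang] G') (hg : Function.Surjective (lift g))
    (horbit : ∀ x, θ.Realize x ↔ ∃ σ : G ≃* G, σ ∘ g = x)
    (hhom : ∀ x : ι → G', θ.Realize x → ∃ ψ : G →* G', ψ ∘ g = x) :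
    Nonempty (G ↪ₑ[groupLang] G') := by
  have hsat : ∃ x : ι → G, θ.Realize x := ⟨g, (horbit g).2 ⟨.refl G, rfl⟩⟩
  rw [← Formula.realize_iExs_relabel_inr (M := G), h.realize_sentence,
    Formula.realize_iExs_relabel_inr] at hsat
  obtain ⟨x', hx'⟩ := hsat
  obtain ⟨ψ, rfl⟩ := hhom x' hx'
  have htype : ∀ x : ι → G, θ.Realize x → ∀ φ : groupLang.Formula ι,
      φ.Realize x ↔ φ.Realize g := by
    intro x hx φ
    obtain ⟨σ, rfl⟩ := (horbit x).1 hx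
    exact StrongHomClass.realize_formula σ φ
  exact ⟨.ofGenerators ψ g (fun y => (hg y).imp' toTerm fun w hw => by rw [realize_toTerm, hw])
    (h.realize_iff_of_forall_realize_iff htype hx')⟩

theorem exists_mulEquiv_apply_eq_of_realize_iff (hg : Function.Surjective (lift g))
    (hθ : θ.IsQF) (horbit : ∀ x, θ.Realize x ↔ ∃ σ : G ≃* G, σ ∘ g = x)
    {κ : Type*} [Finite κ] (u v : κ → G)
    (huv : ∀ φ : groupLang.Formula κ, IsExistentialQF φ → (φ.Realize u ↔ φ.Realize v)) :
    ∃ σ : G ≃* G, ∀ i, σ (u i) = v i := by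
  choose w hw using fun i => hg (u i)
  let χ : groupLang.Formula κ := (θ.relabel Sum.inr ⊓
    Formula.iInf fun i => (Term.var (Sum.inl i)).equal ((w i).toTerm.relabel Sum.inr)).iExs ι
  have hχ : ∀ y : κ → G, χ.Realize y ↔ ∃ x, θ.Realize x ∧ ∀ i, y i = lift x (w i) := by
    intro y
    simp [χ, Function.comp_def]
  have hχE : IsExistentialQF χ :=
    ((hθ.relabel _).inf (BoundedFormula.IsQF.iInf fun _ =>
      (BoundedFormula.IsAtomic.equal _ _).isQF)).isExistentialQF_iExs
  have hχu : χ.Realize u := (hχ u).2 ⟨g, (horbit g).2 ⟨.refl G, rfl⟩, fun i => (hw i).symm⟩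
  obtain ⟨x, hx, hvx⟩ := (hχ v).1 ((huv χ hχE).1 hχu)
  obtain ⟨σ, rfl⟩ := (horbit x).1 hx
  exact ⟨σ, fun i => by rw [hvx, ← hw i, ← MulEquiv.coe_toMonoidHom, hom_map_lift]⟩

end AutOrbit

/-- A finitely presented strongly co-Hopfian group is prime and ∃-homogeneous. -/
theorem stronglyCoHopfian_prime_and_existHomogeneous
    (G : Type*) [Group G] (hfp : GroupFinitelyPresented G)
    (hsch : StronglyCoHopfian G) :
    (∀ (G' : Type*) [Group G'], (G ≅[groupLang] G') → Nonempty (G ↪ₑ[groupLang] G')) ∧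
      (∀ (n : ℕ) (u v : Fin n → G),
        (∀ φ : groupLang.Formula (Fin n), IsExistentialQF φ →
          (φ.Realize u ↔ φ.Realize v)) →
        ∃ σ : G ≃* G, ∀ i, σ (u i) = v i) := by
  obtain ⟨n, rels, ⟨e⟩⟩ := hfp
  obtain ⟨F, hF₁, hF⟩ := hsch
  have hg := PresentedGroup.lift_comp_of_surjective e
  have horbit := PresentedGroup.realize_presentationFormula_iff_exists_mulEquiv e hF₁ hF
  refine ⟨fun G' _ h =>
      nonempty_elementaryEmbedding_of_forall_realize_iff_exists_mulEquiv h hg horbit fun x hx => ?_,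
    fun _ => exists_mulEquiv_apply_eq_of_realize_iff hg
      (FreeGroup.isQF_presentationFormula _ _) horbit⟩
  obtain ⟨ψ, hψ, -⟩ := (PresentedGroup.realize_presentationFormula_iff_exists_hom e _ x).1 hx
  exact ⟨ψ, hψ⟩
end
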